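/- arXiv:2205.12726 — 2 statements merged into one kernel-verified Lean document; each statement's English description precedes it below -/
import Mathlib

section
/- Let ρ_A be a density matrix on ℂ^m and ρ_B a density matrix on ℂ^n, and suppose neither ρ_A nor ρ_B is pure. Then there exists a density matrix σ on ℂ^m ⊗ ℂ^n with tr_B σ = ρ_A, tr_A σ = ρ_B, and σ ≠ ρ_A ⊗ ρ_B. (Thus any pair of non-pure marginals admits a non-trivially correlated joint state, so the quantum-house effect can be achieved with the product state ρ_A ⊗ ρ_B.) -/
open Matrix Kronecker BigOperators ComplexOrder

noncomputable section

/-- Partial trace over the second factor. -/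
def trB {m n : ℕ} (ρ : Matrix (Fin m × Fin n) (Fin m × Fin n) ℂ) :
    Matrix (Fin m) (Fin m) ℂ :=
  fun i j => ∑ k : Fin n, ρ (i, k) (j, k)

/-- Partial trace over the first factor. -/
def trA {m n : ℕ} (ρ : Matrix (Fin m × Fin n) (Fin m × Fin n) ℂ) :
    Matrix (Fin n) (Fin n) ℂ :=
  fun k l => ∑ i : Fin m, ρ (i, k) (i, l)

/-- A density matrix: positive semidefinite with trace 1. -/
def IsDensityMatrix {d : Type*} [Fintype d] [DecidableEq d] (ρ : Matrix d d ℂ) : Prop :=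
  ρ.PosSemidef ∧ ρ.trace = 1

/-- An orthonormal basis of ℂ^m, given as a family of m vectors. -/
def IsONB {m : ℕ} (e : Fin m → Fin m → ℂ) : Prop :=
  ∀ i j, star (e i) ⬝ᵥ e j = if i = j then 1 else 0

/-- The rank-one matrix v v*, with entries v j * conj (v k). -/
def proj {m : ℕ} (v : Fin m → ℂ) : Matrix (Fin m) (Fin m) ℂ :=
  vecMulVec v (star v)

/-- A classical-quantum (zero-discord) state: ρ = ∑ i (eᵢ eᵢ*) ⊗ σᵢ for an
orthonormal basis e of ℂ^m and positive semidefinite σᵢ. -/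
def ClassicalQuantum {m n : ℕ} (ρ : Matrix (Fin m × Fin n) (Fin m × Fin n) ℂ) : Prop :=
  ∃ e : Fin m → Fin m → ℂ, IsONB e ∧
    ∃ σ : Fin m → Matrix (Fin n) (Fin n) ℂ,
      (∀ i, (σ i).PosSemidef) ∧ ρ = ∑ i, proj (e i) ⊗ₖ σ i

/-- A pure state: ρ = ψψ* for a unit vector ψ. -/
def IsPure {d : ℕ} (ρ : Matrix (Fin d) (Fin d) ℂ) : Prop :=
  ∃ ψ : Fin d → ℂ, star ψ ⬝ᵥ ψ = 1 ∧ ρ = vecMulVec ψ (star ψ)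

/-! If `ρ_A` is not pure it has two orthonormal eigenvectors `u₀, u₁` with positive eigenvalues,
so `ρ_A ≥ α (P₀ + P₁)` for the projections `Pᵢ = uᵢ uᵢ*` and some `α > 0`; likewise
`ρ_B ≥ β (Q₀ + Q₁)`. The state `σ = ρ_A ⊗ ρ_B + αβ (P₀ - P₁) ⊗ (Q₀ - Q₁)` has the same marginals as
`ρ_A ⊗ ρ_B`, because `P₀ - P₁` and `Q₀ - Q₁` are traceless, and it is positive semidefinite since
`(P₀ + P₁) ⊗ (Q₀ + Q₁) + (P₀ - P₁) ⊗ (Q₀ - Q₁) = 2 (P₀ ⊗ Q₀ + P₁ ⊗ Q₁)`. -/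

open scoped MatrixOrder

section PartialTrace

variable {m n : ℕ}

@[simp]
lemma trB_add (σ τ : Matrix (Fin m × Fin n) (Fin m × Fin n) ℂ) :
    trB (σ + τ) = trB σ + trB τ := by
  ext i j
  simp [trB, Finset.sum_add_distrib]

@[simp]
lemma trA_add (σ τ : Matrix (Fin m × Fin n) (Fin m × Fin n) ℂ) :
    trA (σ + τ) = trA σ + trA τ := by
  ext k l
  simp [trA, Finset.sum_add_distrib]

@[simp]
lemma trB_smul (c : ℝ) (σ : Matrix (Fin m × Fin n) (Fin m × Fin n) ℂ) :
    trB (c • σ) = c • trB σ := by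
  ext i j
  simp [trB, Finset.smul_sum]

@[simp]
lemma trA_smul (c : ℝ) (σ : Matrix (Fin m × Fin n) (Fin m × Fin n) ℂ) :
    trA (c • σ) = c • trA σ := by
  ext k l
  simp [trA, Finset.smul_sum]

@[simp]
lemma trB_kronecker (X : Matrix (Fin m) (Fin m) ℂ) (Y : Matrix (Fin n) (Fin n) ℂ) :
    trB (X ⊗ₖ Y) = Y.trace • X := by
  ext i j
  simp [trB, trace, ← Finset.mul_sum, mul_comm]

@[simp]
lemma trA_kronecker (X : Matrix (Fin m) (Fin m) ℂ) (Y : Matrix (Fin n) (Fin n) ℂ) :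
    trA (X ⊗ₖ Y) = X.trace • Y := by
  ext k l
  simp [trA, trace, Finset.sum_mul]

end PartialTrace

lemma Matrix.kronecker_ne_zero {α l m p q : Type*} [MulZeroClass α] [NoZeroDivisors α]
    {A : Matrix l m α} {B : Matrix p q α} (hA : A ≠ 0) (hB : B ≠ 0) : A ⊗ₖ B ≠ 0 := by
  obtain ⟨i, j, hij⟩ : ∃ i j, A i j ≠ 0 := by
    by_contra! h
    exact hA (Matrix.ext h)
  obtain ⟨k, l, hkl⟩ : ∃ k l, B k l ≠ 0 := by
    by_contra! h
    exact hB (Matrix.ext h)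
  intro h
  exact mul_ne_zero hij hkl (by simpa using congr_fun₂ h (i, k) (j, l))

section Proj

variable {d : ℕ}

lemma proj_posSemidef (v : Fin d → ℂ) : (proj v).PosSemidef :=
  posSemidef_vecMulVec_self_star v

lemma trace_proj (v : Fin d → ℂ) : (proj v).trace = star v ⬝ᵥ v := by
  simp [proj, dotProduct_comm]

lemma proj_mulVec (u v : Fin d → ℂ) : proj u *ᵥ v = (star u ⬝ᵥ v) • u := by
  rw [proj, vecMulVec_mulVec, op_smul_eq_smul]

lemma proj_sub_proj_ne_zero {u₀ u₁ : Fin d → ℂ} (h₀ : star u₀ ⬝ᵥ u₀ = 1)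
    (h₁₀ : star u₁ ⬝ᵥ u₀ = 0) : proj u₀ - proj u₁ ≠ 0 := by
  intro h
  have hu₀ : (proj u₀ - proj u₁) *ᵥ u₀ = u₀ := by
    simp [sub_mulVec, proj_mulVec, h₀, h₁₀]
  rw [h, zero_mulVec] at hu₀
  simp [← hu₀] at h₀

end Proj

namespace Matrix.IsHermitian

variable {d : Type*} [Fintype d] [DecidableEq d] {A : Matrix d d ℂ}

lemma eq_sum_eigenvalues_smul_vecMulVec (hA : A.IsHermitian) :
    A = ∑ i, hA.eigenvalues i •
      vecMulVec ⇑(hA.eigenvectorBasis i) (star ⇑(hA.eigenvectorBasis i)) := by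
  conv_lhs => rw [hA.spectral_theorem, Unitary.conjStarAlgAut_apply]
  ext i j
  simp only [mul_apply, diagonal_apply, Function.comp_apply, star_apply, sum_apply, smul_apply,
    vecMulVec_apply, Pi.star_apply, eigenvectorUnitary_apply, Complex.real_smul]
  refine Finset.sum_congr rfl fun k _ => ?_
  rw [Finset.sum_eq_single k (fun b _ hb => by simp [hb]) (by simp)]
  simp only [↓reduceIte, Complex.coe_algebraMap, RCLike.star_def]
  ring

lemma star_eigenvectorBasis_dotProduct (hA : A.IsHermitian) (i j : d) :
    star ⇑(hA.eigenvectorBasis i) ⬝ᵥ ⇑(hA.eigenvectorBasis j) = if i = j then 1 else 0 := by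
  rw [dotProduct_comm, ← EuclideanSpace.inner_eq_star_dotProduct]
  exact orthonormal_iff_ite.mp hA.eigenvectorBasis.orthonormal i j

end Matrix.IsHermitian

lemma Matrix.smul_add_le_sum_smul {d ι : Type*} [Fintype d] [Fintype ι] [DecidableEq ι]
    {c : ι → ℝ} {P : ι → Matrix d d ℂ} (hc : ∀ k, 0 ≤ c k) (hP : ∀ k, (P k).PosSemidef)
    {i j : ι} (hij : i ≠ j) {α : ℝ} (hi : α ≤ c i) (hj : α ≤ c j) :
    α • (P i + P j) ≤ ∑ k, c k • P k := by
  rw [Matrix.le_iff, ← Finset.add_sum_erase _ _ (Finset.mem_univ i),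
    ← Finset.add_sum_erase _ _ (Finset.mem_erase.2 ⟨hij.symm, Finset.mem_univ j⟩)]
  set rest := ∑ k ∈ (Finset.univ.erase i).erase j, c k • P k
  have hrest : rest.PosSemidef := posSemidef_sum _ fun k _ => (hP k).smul (hc k)
  have hsplit : c i • P i + (c j • P j + rest) - α • (P i + P j) =
      ((c i - α) • P i + (c j - α) • P j) + rest := by
    module
  rw [hsplit]
  exact (((hP i).smul (sub_nonneg.2 hi)).add ((hP j).smul (sub_nonneg.2 hj))).add hrest

namespace IsDensityMatrix

variable {d : ℕ} {ρ : Matrix (Fin d) (Fin d) ℂ}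

lemma sum_eigenvalues_eq_one (h : IsDensityMatrix ρ) : ∑ i, h.1.1.eigenvalues i = 1 := by
  have h_trace := h.2
  rw [h.1.1.trace_eq_sum_eigenvalues] at h_trace
  simpa using congrArg Complex.re h_trace

lemma exists_ne_eigenvalues_pos (h : IsDensityMatrix ρ) (hρ : ¬ IsPure ρ) :
    ∃ i j, i ≠ j ∧ 0 < h.1.1.eigenvalues i ∧ 0 < h.1.1.eigenvalues j := by
  set μ := h.1.1.eigenvalues
  have hnonneg : ∀ i, 0 ≤ μ i := h.1.eigenvalues_nonneg
  obtain ⟨i, -, hi⟩ :=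
    Finset.exists_ne_zero_of_sum_ne_zero (h.sum_eigenvalues_eq_one ▸ one_ne_zero)
  refine ⟨i, ?_⟩
  by_contra! hzero
  replace hzero : ∀ j, j ≠ i → μ j = 0 := fun j hj =>
    le_antisymm (hzero j (Ne.symm hj) ((hnonneg i).lt_of_ne' hi)) (hnonneg j)
  have hi_one : μ i = 1 := by
    rw [← h.sum_eigenvalues_eq_one, Finset.sum_eq_single i (fun j _ hj => hzero j hj) (by simp)]
  refine hρ ⟨h.1.1.eigenvectorBasis i, by simp [h.1.1.star_eigenvectorBasis_dotProduct], ?_⟩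
  refine h.1.1.eq_sum_eigenvalues_smul_vecMulVec.trans ?_
  rw [Finset.sum_eq_single i (fun j _ hj => by simp [μ, hzero j hj]) (by simp)]
  simp [μ, hi_one]

lemma exists_smul_proj_add_proj_le (h : IsDensityMatrix ρ) (hρ : ¬ IsPure ρ) :
    ∃ (u₀ u₁ : Fin d → ℂ) (α : ℝ), star u₀ ⬝ᵥ u₀ = 1 ∧ star u₁ ⬝ᵥ u₁ = 1 ∧
      star u₁ ⬝ᵥ u₀ = 0 ∧ 0 < α ∧ α • (proj u₀ + proj u₁) ≤ ρ := by
  obtain ⟨i, j, hij, hi, hj⟩ := h.exists_ne_eigenvalues_pos hρ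
  have hONB := h.1.1.star_eigenvectorBasis_dotProduct
  refine ⟨h.1.1.eigenvectorBasis i, h.1.1.eigenvectorBasis j,
    min (h.1.1.eigenvalues i) (h.1.1.eigenvalues j), by simp [hONB], by simp [hONB],
    by simp [hONB, hij.symm], lt_min hi hj, ?_⟩
  calc _ ≤ _ := smul_add_le_sum_smul h.1.eigenvalues_nonneg (fun k => proj_posSemidef _) hij
        (min_le_left _ _) (min_le_right _ _)
    _ = ρ := h.1.1.eq_sum_eigenvalues_smul_vecMulVec.symm

end IsDensityMatrix

lemma Matrix.posSemidef_kronecker_add_smul_kronecker_sub {l m : Type*} [Fintype l] [Fintype m]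
    {ρ P₀ P₁ : Matrix l l ℂ} {τ Q₀ Q₁ : Matrix m m ℂ} {α β : ℝ} (hα : 0 ≤ α) (hβ : 0 ≤ β)
    (hP₀ : P₀.PosSemidef) (hP₁ : P₁.PosSemidef) (hQ₀ : Q₀.PosSemidef) (hQ₁ : Q₁.PosSemidef)
    (hρ : α • (P₀ + P₁) ≤ ρ) (hτ : β • (Q₀ + Q₁) ≤ τ) :
    (ρ ⊗ₖ τ + (α * β) • ((P₀ - P₁) ⊗ₖ (Q₀ - Q₁))).PosSemidef := by
  obtain ⟨R, hR, rfl⟩ : ∃ R, R.PosSemidef ∧ ρ = R + α • (P₀ + P₁) :=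
    ⟨_, Matrix.le_iff.mp hρ, (sub_add_cancel _ _).symm⟩
  obtain ⟨S, hS, rfl⟩ : ∃ S, S.PosSemidef ∧ τ = S + β • (Q₀ + Q₁) :=
    ⟨_, Matrix.le_iff.mp hτ, (sub_add_cancel _ _).symm⟩
  have hτ' : (S + β • (Q₀ + Q₁)).PosSemidef := hS.add ((hQ₀.add hQ₁).smul hβ)
  have hsplit : (R + α • (P₀ + P₁)) ⊗ₖ (S + β • (Q₀ + Q₁)) + (α * β) • ((P₀ - P₁) ⊗ₖ (Q₀ - Q₁))
      = R ⊗ₖ (S + β • (Q₀ + Q₁)) + α • ((P₀ + P₁) ⊗ₖ S) +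
        (2 * α * β) • (P₀ ⊗ₖ Q₀ + P₁ ⊗ₖ Q₁) := by
    ext ⟨i, k⟩ ⟨j, l⟩
    simp only [kroneckerMap_apply, add_apply, sub_apply, smul_apply, Complex.real_smul]
    push_cast
    ring
  rw [hsplit]
  exact ((hR.kronecker hτ').add (((hP₀.add hP₁).kronecker hS).smul hα)).add
    (((hP₀.kronecker hQ₀).add (hP₁.kronecker hQ₁)).smul (by positivity))

theorem stmt2 {m n : ℕ} (ρA : Matrix (Fin m) (Fin m) ℂ) (ρB : Matrix (Fin n) (Fin n) ℂ)
    (hA : IsDensityMatrix ρA) (hB : IsDensityMatrix ρB)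
    (hApure : ¬ IsPure ρA) (hBpure : ¬ IsPure ρB) :
    ∃ σ : Matrix (Fin m × Fin n) (Fin m × Fin n) ℂ,
      IsDensityMatrix σ ∧ trB σ = ρA ∧ trA σ = ρB ∧ σ ≠ ρA ⊗ₖ ρB := by
  obtain ⟨u₀, u₁, α, hu₀, hu₁, hu₁₀, hα, hρA⟩ := hA.exists_smul_proj_add_proj_le hApure
  obtain ⟨v₀, v₁, β, hv₀, hv₁, hv₁₀, hβ, hρB⟩ := hB.exists_smul_proj_add_proj_le hBpure
  have htrA : (proj u₀ - proj u₁).trace = 0 := by simp [trace_proj, hu₀, hu₁]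
  have htrB : (proj v₀ - proj v₁).trace = 0 := by simp [trace_proj, hv₀, hv₁]
  refine ⟨ρA ⊗ₖ ρB + (α * β) • ((proj u₀ - proj u₁) ⊗ₖ (proj v₀ - proj v₁)),
    ⟨posSemidef_kronecker_add_smul_kronecker_sub hα.le hβ.le (proj_posSemidef _)
      (proj_posSemidef _) (proj_posSemidef _) (proj_posSemidef _) hρA hρB, ?_⟩, ?_, ?_, ?_⟩
  · simp [trace_kronecker, hA.2, hB.2, htrA]
  · simp [hB.2, htrB]
  · simp [hA.2, htrA]
  · rw [Ne, add_eq_left, smul_eq_zero, not_or]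
    exact ⟨by positivity, kronecker_ne_zero (proj_sub_proj_ne_zero hu₀ hu₁₀)
      (proj_sub_proj_ne_zero hv₀ hv₁₀)⟩
end
end

section
/- A density matrix ρ on ℂ^m ⊗ ℂ^n is classical-quantum if and only if there exists an orthonormal basis e : Fin m → (Fin m → ℂ) of ℂ^m such that the dephasing of ρ in this basis fixes ρ, i.e. ∑_i ((e_i e_i*) ⊗ I_n) ρ ((e_i e_i*) ⊗ I_n) = ρ. (Equivalently: ρ has nonzero quantum discord if and only if every complete projective measurement on subsystem A perturbs ρ.) -/
open Matrix Kronecker BigOperators ComplexOrder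

noncomputable section

/-!
Write `B v = colKronOne v : ℂ^n → ℂ^m ⊗ ℂ^n` for the map `x ↦ v ⊗ x`, so that
`proj v ⊗ M = B v M (B v)ᴴ`. Then `(proj v ⊗ I) ρ (proj v ⊗ I) = proj v ⊗ ((B v)ᴴ ρ (B v))`, and
the compressed blocks `(B eᵢ)ᴴ ρ (B eᵢ)` are positive semidefinite when `ρ` is. Hence a state fixed
by the dephasing in the basis `e` is classical-quantum with `σᵢ = (B eᵢ)ᴴ ρ (B eᵢ)`. Conversely,
for an orthonormal basis `(B eᵢ)ᴴ (B eⱼ) = δᵢⱼ I`, so the dephasing kills the off-diagonal terms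
of `∑ⱼ proj eⱼ ⊗ σⱼ` and fixes the diagonal ones.
-/

namespace Matrix

variable {ι : Type*}

def colKronOne (κ : Type*) [DecidableEq κ] (v : ι → ℂ) : Matrix (ι × κ) κ ℂ :=
  of fun p l => v p.1 * (1 : Matrix κ κ ℂ) p.2 l

variable {κ : Type*} [Fintype κ] [DecidableEq κ]

theorem conjTranspose_colKronOne_mul_colKronOne [Fintype ι] (v w : ι → ℂ) :
    (colKronOne κ v)ᴴ * colKronOne κ w = (star v ⬝ᵥ w) • (1 : Matrix κ κ ℂ) := by
  ext k l
  simp [colKronOne, mul_apply, Fintype.sum_prod_type, one_apply, dotProduct,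
    apply_ite (starRingEnd ℂ), mul_comm, eq_comm]

theorem proj_kronecker_eq {m : ℕ} (v : Fin m → ℂ) (M : Matrix κ κ ℂ) :
    proj v ⊗ₖ M = colKronOne κ v * M * (colKronOne κ v)ᴴ := by
  ext ⟨a, k⟩ ⟨b, l⟩
  simp [proj, colKronOne, mul_apply, one_apply, vecMulVec_apply, apply_ite (starRingEnd ℂ)]
  ring

end Matrix

section Dephasing

variable {m : ℕ} {κ : Type*} [Fintype κ] [DecidableEq κ]

def dephase (e : Fin m → Fin m → ℂ) (ρ : Matrix (Fin m × κ) (Fin m × κ) ℂ) :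
    Matrix (Fin m × κ) (Fin m × κ) ℂ :=
  ∑ i, (proj (e i) ⊗ₖ (1 : Matrix κ κ ℂ)) * ρ * (proj (e i) ⊗ₖ (1 : Matrix κ κ ℂ))

theorem proj_kronecker_one_mul_mul (v : Fin m → ℂ) (ρ : Matrix (Fin m × κ) (Fin m × κ) ℂ) :
    (proj v ⊗ₖ (1 : Matrix κ κ ℂ)) * ρ * (proj v ⊗ₖ (1 : Matrix κ κ ℂ)) =
      proj v ⊗ₖ ((colKronOne κ v)ᴴ * ρ * colKronOne κ v) := by
  simp only [proj_kronecker_eq, Matrix.mul_one, Matrix.mul_assoc]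

theorem dephase_eq_sum (e : Fin m → Fin m → ℂ) (ρ : Matrix (Fin m × κ) (Fin m × κ) ℂ) :
    dephase e ρ = ∑ i, proj (e i) ⊗ₖ ((colKronOne κ (e i))ᴴ * ρ * colKronOne κ (e i)) :=
  Finset.sum_congr rfl fun i _ => proj_kronecker_one_mul_mul (e i) ρ

theorem dephase_sum_proj_kronecker {e : Fin m → Fin m → ℂ} (he : IsONB e)
    (σ : Fin m → Matrix κ κ ℂ) :
    dephase e (∑ j, proj (e j) ⊗ₖ σ j) = ∑ j, proj (e j) ⊗ₖ σ j := by
  have hB : ∀ i j, (colKronOne κ (e i))ᴴ * colKronOne κ (e j) =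
      if i = j then 1 else 0 := fun i j => by
    rw [conjTranspose_colKronOne_mul_colKronOne, he i j]
    split_ifs <;> simp
  have hterm : ∀ i j, (colKronOne κ (e i))ᴴ * (proj (e j) ⊗ₖ σ j) * colKronOne κ (e i) =
      if i = j then σ j else 0 := fun i j => by
    rw [proj_kronecker_eq, ← Matrix.mul_assoc, ← Matrix.mul_assoc, hB, Matrix.mul_assoc, hB]
    obtain rfl | hij := eq_or_ne i j
    · simp
    · simp [hij, hij.symm]
  simp only [dephase_eq_sum, Matrix.mul_sum, Matrix.sum_mul, hterm, Finset.sum_ite_eq,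
    Finset.mem_univ, if_true]

end Dephasing

theorem stmt4 {m n : ℕ} (ρ : Matrix (Fin m × Fin n) (Fin m × Fin n) ℂ)
    (hρ : IsDensityMatrix ρ) :
    ClassicalQuantum ρ ↔
      ∃ e : Fin m → Fin m → ℂ, IsONB e ∧
        (∑ i, (proj (e i) ⊗ₖ (1 : Matrix (Fin n) (Fin n) ℂ)) * ρ *
            (proj (e i) ⊗ₖ (1 : Matrix (Fin n) (Fin n) ℂ))) = ρ := by
  constructor
  · rintro ⟨e, he, σ, -, rfl⟩
    exact ⟨e, he, dephase_sum_proj_kronecker he σ⟩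
  · rintro ⟨e, he, hfix⟩
    refine ⟨e, he, fun i => (colKronOne (Fin n) (e i))ᴴ * ρ * colKronOne (Fin n) (e i),
      fun i => hρ.1.conjTranspose_mul_mul_same _, ?_⟩
    rw [← dephase_eq_sum]
    exact hfix.symm
end
end
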